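/- Let M be a smooth (super)manifold, O its ring of smooth functions, T the O-module of vector fields (derivations of O), and μ₂: T ×_O T → T an O-bilinear, associative, (graded) commutative multiplication. Then the Hertling–Manin expression [μ₂,μ₂](X,Y,Z,W) := [μ₂(X,Y), μ₂(Z,W)] - μ₂([μ₂(X,Y),Z],W) - (-1)^{(|X|+|Y|)|Z|} μ₂(Z,[μ₂(X,Y),W]) - μ₂(X,[Y,μ₂(Z,W)]) - (-1)^{|Y|(|Z|+|W|)} μ₂([X,μ₂(Z,W)],Y) + (-1)^{|Y||Z|} μ₂(X,μ₂(Z,[Y,W])) + μ₂(X,μ₂([Y,Z],W)) + (-1)^{|Y||Z|} μ₂([X,Z],μ₂(Y,W)) + (-1)^{|W|(|Y|+|Z|)} μ₂([X,W],μ₂(Y,Z)) is O-linear in the first argument X; that is, for any function f ∈ O, [μ₂,μ₂](fX,Y,Z,W) = f·[μ₂,μ₂](X,Y,Z,W) (in the ungraded, even case). -/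
import Mathlib


/-- The Hertling–Manin expression `[μ,μ](X,Y,Z,W)` (ungraded, even case: all signs `+1`),
where `⁅·,·⁆` is the commutator bracket of derivations. -/
def hmBracket {R A : Type*} [CommRing R] [CommRing A] [Algebra R A]
    (μ : Derivation R A A → Derivation R A A → Derivation R A A)
    (X Y Z W : Derivation R A A) : Derivation R A A :=
  ⁅μ X Y, μ Z W⁆ - μ ⁅μ X Y, Z⁆ W - μ Z ⁅μ X Y, W⁆
    - μ X ⁅Y, μ Z W⁆ - μ ⁅X, μ Z W⁆ Y
    + μ X (μ Z ⁅Y, W⁆) + μ X (μ ⁅Y, Z⁆ W)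
    + μ ⁅X, Z⁆ (μ Y W) + μ ⁅X, W⁆ (μ Y Z)


lemma smul_bracket {R A : Type*} [CommRing R] [CommRing A] [Algebra R A]
    (f : A) (X Y : Derivation R A A) :
    ⁅f • X, Y⁆ = f • ⁅X, Y⁆ - Y f • X := by
  ext a
  simp only [Derivation.commutator_apply, Derivation.smul_apply, Derivation.sub_apply,
    Derivation.leibniz, smul_eq_mul]
  ring

lemma bracket_smul {R A : Type*} [CommRing R] [CommRing A] [Algebra R A]
    (f : A) (X Y : Derivation R A A) :
    ⁅X, f • Y⁆ = f • ⁅X, Y⁆ + X f • Y := by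
  ext a
  simp only [Derivation.commutator_apply, Derivation.smul_apply, Derivation.add_apply,
    Derivation.leibniz, smul_eq_mul]
  ring

/-- If `μ` is an `O`-bilinear, commutative, associative multiplication on the
module of vector fields (derivations of `O = A`), then the Hertling–Manin expression
`[μ,μ](X,Y,Z,W)` is `O`-linear in the first argument:
`[μ,μ](fX,Y,Z,W) = f·[μ,μ](X,Y,Z,W)` (ungraded, even case). -/
theorem hmBracket_smul_first
    {R A : Type*} [CommRing R] [CommRing A] [Algebra R A]
    (μ : Derivation R A A → Derivation R A A → Derivation R A A)
    (haddl : ∀ X X' Y, μ (X + X') Y = μ X Y + μ X' Y)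
    (haddr : ∀ X Y Y', μ X (Y + Y') = μ X Y + μ X Y')
    (hlinl : ∀ (f : A) X Y, μ (f • X) Y = f • μ X Y)
    (hlinr : ∀ (f : A) X Y, μ X (f • Y) = f • μ X Y)
    (hcomm : ∀ X Y, μ X Y = μ Y X)
    (hassoc : ∀ X Y Z, μ (μ X Y) Z = μ X (μ Y Z))
    (f : A) (X Y Z W : Derivation R A A) :
    hmBracket μ (f • X) Y Z W = f • hmBracket μ X Y Z W := by
  have hnegl : ∀ X Y, μ (-X) Y = -(μ X Y) := fun X Y => by
    rw [← neg_one_smul A X, hlinl, neg_one_smul]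
  have hsubl : ∀ X X' Y, μ (X - X') Y = μ X Y - μ X' Y := fun X X' Y => by
    rw [sub_eq_add_neg, haddl, hnegl, ← sub_eq_add_neg]
  have hnegr : ∀ X Y, μ X (-Y) = -(μ X Y) := fun X Y => by
    rw [← neg_one_smul A Y, hlinr, neg_one_smul]
  have hsubr : ∀ X Y Y', μ X (Y - Y') = μ X Y - μ X Y' := fun X Y Y' => by
    rw [sub_eq_add_neg, haddr, hnegr, ← sub_eq_add_neg]
  have h1 : μ Z (μ X Y) = μ X (μ Y Z) := by rw [hcomm, hassoc]
  have h2 : μ (μ X Y) W = μ X (μ Y W) := hassoc X Y W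
  simp only [hmBracket, smul_bracket, hsubl, hsubr, hlinl, hlinr]
  rw [h1, h2]
  module
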